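/- Root relocation within the steiner tree preserves messages: given a calibrated junction tree for a pivot query and a delta query whose differing annotations span a connected steiner subtree T, for any two choices of root bag within T, the set of messages computed along edges internal to T when executing the delta query are determined solely by T and the annotations, and all messages along edges crossing into T from outside equal the stored calibrated messages; consequently the delta query result is the same for any root choice in T. -/

import Mathlib

open Finset

variable {Att : Type*} [Fintype Att] [DecidableEq Att]
variable {Val : Att → Type*} [∀ a, Fintype (Val a)] [∀ a, DecidableEq (Val a)]
variable {D : Type*} [CommSemiring D]

/-- `R` depends only on the attributes in schema `S`. -/
def DependsOnlyOn (R : (∀ a, Val a) → D) (S : Finset Att) : Prop :=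
  ∀ t₁ t₂ : ∀ a, Val a, (∀ a ∈ S, t₁ a = t₂ a) → R t₁ = R t₂

/-- Join of annotated relations: multiply the annotations. -/
def joinRel (R T : (∀ a, Val a) → D) : (∀ a, Val a) → D := fun t => R t * T t

/-- Marginalize out a single attribute `A`: sum over all values of `A`. -/
def marg (A : Att) (R : (∀ a, Val a) → D) : (∀ a, Val a) → D :=
  fun t => ∑ v : Val A, R (Function.update t A v)

/-- Marginalize out all attributes in `E`. -/
def margOver (E : Finset Att) (R : (∀ a, Val a) → D) : (∀ a, Val a) → D :=
  fun t => ∑ s : ∀ a, Val a, if ∀ a, a ∉ E → s a = t a then R s else 0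

variable {V : Type*} [Fintype V] [DecidableEq V]

set_option linter.unusedSectionVars false

lemma DependsOnlyOn.mono {R : (∀ a, Val a) → D} {S S' : Finset Att} (hSS : S ⊆ S')
    (hR : DependsOnlyOn R S) : DependsOnlyOn R S' :=
  fun t₁ t₂ h => hR t₁ t₂ fun a ha => h a (hSS ha)

lemma DependsOnlyOn.mul {F H : (∀ a, Val a) → D} {S : Finset Att}
    (hF : DependsOnlyOn F S) (hH : DependsOnlyOn H S) :
    DependsOnlyOn (fun t => F t * H t) S :=
  fun t₁ t₂ h => by simp only []; rw [hF t₁ t₂ h, hH t₁ t₂ h]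

lemma DependsOnlyOn.prod {ι : Type*} {s : Finset ι} {F : ι → (∀ a, Val a) → D} {S : Finset Att}
    (hF : ∀ i ∈ s, DependsOnlyOn (F i) S) :
    DependsOnlyOn (fun t => ∏ i ∈ s, F i t) S :=
  fun t₁ t₂ h => Finset.prod_congr rfl fun i hi => hF i hi t₁ t₂ h

lemma DependsOnlyOn.margOver {R : (∀ a, Val a) → D} {S E : Finset Att}
    (hR : DependsOnlyOn R S) : DependsOnlyOn (margOver E R) (S \ E) := by
  intro t₁ t₂ ht
  classical
  have hσ : Function.Involutive
      (fun (s : ∀ a, Val a) => fun a => if a ∈ E then s a else Equiv.swap (t₁ a) (t₂ a) (s a)) := by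
    intro s; funext a; by_cases h : a ∈ E <;> simp [h]
  show (∑ s : ∀ a, Val a, _) = _
  refine Fintype.sum_bijective _ hσ.bijective _ _ fun s => ?_
  by_cases hc : ∀ a, a ∉ E → s a = t₁ a
  · have hc' : ∀ a, a ∉ E → (if a ∈ E then s a else Equiv.swap (t₁ a) (t₂ a) (s a)) = t₂ a := by
      intro a ha; simp [ha, hc a ha]
    rw [if_pos hc, if_pos hc']
    refine hR _ _ fun a haS => ?_
    by_cases h : a ∈ E
    · simp [h]
    · simp only [h, if_false, hc a h, Equiv.swap_apply_left]
      exact (ht a (Finset.mem_sdiff.mpr ⟨haS, h⟩))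
  · have hc' : ¬ ∀ a, a ∉ E → (if a ∈ E then s a else Equiv.swap (t₁ a) (t₂ a) (s a)) = t₂ a := by
      intro h; apply hc; intro a ha
      have := h a ha; simp only [ha, if_false] at this
      have := congrArg (Equiv.swap (t₁ a) (t₂ a)) this
      rwa [Equiv.swap_apply_self, Equiv.swap_apply_right] at this
    rw [if_neg hc, if_neg hc']

lemma margOver_mul_left {F H : (∀ a, Val a) → D} {S E : Finset Att}
    (hF : DependsOnlyOn F S) (hSE : Disjoint S E) :
    margOver E (fun t => F t * H t) = fun t => F t * margOver E H t := by
  funext t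
  show (∑ s : ∀ a, Val a, _) = _
  rw [margOver, Finset.mul_sum]
  refine Finset.sum_congr rfl fun s _ => ?_
  by_cases hc : ∀ a, a ∉ E → s a = t a
  · rw [if_pos hc, if_pos hc]
    have : F s = F t := hF s t fun a ha => hc a (Finset.disjoint_left.mp hSE ha)
    show F s * H s = F t * H s
    rw [this]
  · rw [if_neg hc, if_neg hc, mul_zero]

lemma margOver_margOver {F : (∀ a, Val a) → D} {E₁ E₂ : Finset Att}
    (hE : Disjoint E₁ E₂) :
    margOver E₁ (margOver E₂ F) = margOver (E₁ ∪ E₂) F := by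
  classical
  funext t
  simp only [margOver]
  have step1 : ∀ s : ∀ a, Val a,
      (if (∀ a, a ∉ E₁ → s a = t a) then (∑ u : ∀ a, Val a,
        if (∀ a, a ∉ E₂ → u a = s a) then F u else 0) else 0)
      = ∑ u : ∀ a, Val a,
        if ((∀ a, a ∉ E₁ → s a = t a) ∧ (∀ a, a ∉ E₂ → u a = s a)) then F u else 0 := by
    intro s
    split_ifs with h
    · exact Finset.sum_congr rfl fun u _ => (if_congr (and_iff_right h) rfl rfl).symm
    · symm; refine Finset.sum_eq_zero fun u _ => ?_
      rw [if_neg (fun hh => h hh.1)]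
  simp only [step1]
  rw [Finset.sum_comm]
  refine Finset.sum_congr rfl fun u _ => ?_
  set s₀ : ∀ a, Val a := fun a => if a ∈ E₂ then t a else u a with hs₀
  have key : ∀ s : ∀ a, Val a,
      ((∀ a, a ∉ E₁ → s a = t a) ∧ (∀ a, a ∉ E₂ → u a = s a))
        ↔ (s = s₀ ∧ ∀ a, a ∉ E₁ ∪ E₂ → u a = t a) := by
    intro s
    constructor
    · rintro ⟨h1, h2⟩
      constructor
      · funext a
        by_cases h : a ∈ E₂
        · have : a ∉ E₁ := Finset.disjoint_right.mp hE h
          simp [hs₀, h, h1 a this]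
        · simp [hs₀, h, (h2 a h).symm]
      · intro a ha
        rw [Finset.mem_union] at ha; push_neg at ha
        rw [h2 a ha.2, h1 a ha.1]
    · rintro ⟨rfl, hq⟩
      constructor
      · intro a ha
        by_cases h : a ∈ E₂
        · simp [hs₀, h]
        · simp only [hs₀, h, if_false]
          exact hq a (by simp [ha, h])
      · intro a ha; simp [hs₀, ha]
  have : ∀ s : ∀ a, Val a,
      (if ((∀ a, a ∉ E₁ → s a = t a) ∧ (∀ a, a ∉ E₂ → u a = s a)) then F u else 0)
      = if s = s₀ then (if (∀ a, a ∉ E₁ ∪ E₂ → u a = t a) then F u else 0) else 0 := by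
    intro s
    rw [if_congr (key s) rfl rfl]
    by_cases h : s = s₀ <;> simp [h, and_comm]
  simp only [this]
  rw [Finset.sum_ite_eq' Finset.univ s₀]
  simp

/-- `w` lies in the subtree rooted at `u` away from `v`: there is a walk from
`w` to `u` that avoids `v`. -/
def InSubtree (G : SimpleGraph V) (u v w : V) : Prop :=
  ∃ p : G.Walk w u, v ∉ p.support

/-- The running intersection property: if an attribute belongs to two bags then
it belongs to every bag on the path between them. -/
def RunningIntersection (G : SimpleGraph V) (bag : V → Finset Att) : Prop :=
  ∀ (a : Att) (u v : V) (p : G.Walk u v), p.IsPath →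
    a ∈ bag u → a ∈ bag v → ∀ w ∈ p.support, a ∈ bag w

/-- `M` is a message system for the junction tree `(G, bag)` with local
relations `L`: the message `u → v` marginalizes, onto the attributes shared by
`u` and `v`, the join of `u`'s local relation with all incoming messages from
`u`'s neighbors other than `v`. -/
def MsgSystem (G : SimpleGraph V) [DecidableRel G.Adj] (bag : V → Finset Att)
    (L : V → (∀ a, Val a) → D) (M : V → V → (∀ a, Val a) → D) : Prop :=
  ∀ u v, G.Adj u v →
    M u v = margOver (bag u \ bag v)
      (fun t => L u t * ∏ w ∈ (G.neighborFinset u).erase v, M w u t)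

/-- Absorption at a bag: join of its local relation with all incoming messages. -/
def absorb (G : SimpleGraph V) [DecidableRel G.Adj]
    (L : V → (∀ a, Val a) → D) (M : V → V → (∀ a, Val a) → D) (v : V) :
    (∀ a, Val a) → D :=
  fun t => L v t * ∏ w ∈ G.neighborFinset v, M w v t

lemma path_eq_of_isAcyclic {G : SimpleGraph V} (hG : G.IsAcyclic) {u v : V}
    {p q : G.Walk u v} (hp : p.IsPath) (hq : q.IsPath) : p = q := by
  have := hG.path_unique ⟨p, hp⟩ ⟨q, hq⟩
  exact congrArg Subtype.val this

lemma insubtree_self {G : SimpleGraph V} {u v : V} (huv : G.Adj u v) :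
    InSubtree G u v u :=
  ⟨SimpleGraph.Walk.nil, by simp [huv.ne']⟩

lemma not_insubtree_start {G : SimpleGraph V} {u v w : V} :
    ¬ InSubtree G u w w := by
  rintro ⟨p, hp⟩
  exact hp p.start_mem_support

lemma insubtree_step {G : SimpleGraph V} (hG : G.IsAcyclic) {u v w x : V}
    (huv : G.Adj u v) (huw : G.Adj u w) (hwv : w ≠ v)
    (h : InSubtree G w u x) : InSubtree G u v x := by
  obtain ⟨p, hup⟩ := h
  have hvp : v ∉ p.support := by
    intro hv
    have huq : u ∉ (p.dropUntil v hv).support :=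
      fun hh => hup (p.support_dropUntil_subset hv hh)
    have hP : u ∉ ((p.dropUntil v hv).toPath : G.Walk v w).support :=
      fun hh => huq ((p.dropUntil v hv).support_toPath_subset hh)
    have explicit : (SimpleGraph.Walk.cons huv.symm
        (SimpleGraph.Walk.cons huw SimpleGraph.Walk.nil) : G.Walk v w).IsPath := by
      simp [SimpleGraph.Walk.cons_isPath_iff, huv.ne', hwv.symm, huw.ne]
    have := path_eq_of_isAcyclic hG ((p.dropUntil v hv).toPath).2 explicit
    rw [this] at hP
    simp at hP
  refine ⟨p.concat huw.symm, ?_⟩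
  rw [SimpleGraph.Walk.support_concat]
  simp only [List.concat_eq_append, List.mem_append, List.mem_singleton]
  rintro (h | h)
  · exact hvp h
  · exact huv.ne' h

lemma insubtree_ncard_lt {G : SimpleGraph V} (hG : G.IsAcyclic) {u v w : V}
    (huv : G.Adj u v) (huw : G.Adj u w) (hwv : w ≠ v) :
    {x | InSubtree G w u x}.ncard < {x | InSubtree G u v x}.ncard := by
  refine Set.ncard_lt_ncard ?_ (Set.toFinite _)
  constructor
  · exact fun x hx => insubtree_step hG huv huw hwv hx
  · intro hsub
    exact not_insubtree_start (v := u) (hsub (insubtree_self huv))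

lemma msg_eq_of_eq_on_subtree {G : SimpleGraph V} [DecidableRel G.Adj]
    (hG : G.IsAcyclic) (bag : V → Finset Att)
    {LA LB : V → (∀ a, Val a) → D} {MA MB : V → V → (∀ a, Val a) → D}
    (hA : MsgSystem G bag LA MA) (hB : MsgSystem G bag LB MB) :
    ∀ (n : ℕ) (u v : V), G.Adj u v → {x | InSubtree G u v x}.ncard ≤ n →
      (∀ w, InSubtree G u v w → LA w = LB w) → MA u v = MB u v := by
  intro n
  induction n with
  | zero =>
    intro u v huv hn _
    exfalso
    have : 0 < {x | InSubtree G u v x}.ncard :=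
      (Set.ncard_pos (Set.toFinite _)).mpr ⟨u, insubtree_self huv⟩
    omega
  | succ n ih =>
    intro u v huv hn hL
    rw [hA u v huv, hB u v huv]
    refine congrArg _ (funext fun t => ?_)
    rw [hL u (insubtree_self huv)]
    refine congrArg _ (Finset.prod_congr rfl fun w hw => ?_)
    obtain ⟨hwv, hw⟩ := Finset.mem_erase.mp hw
    have huw : G.Adj u w := (SimpleGraph.mem_neighborFinset _ _ _).mp hw
    have hlt := insubtree_ncard_lt hG huv huw hwv
    rw [ih w u huw.symm (by omega)
      (fun x hx => hL x (insubtree_step hG huv huw hwv hx))]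

lemma msg_dep {G : SimpleGraph V} [DecidableRel G.Adj]
    (hG : G.IsAcyclic) (bag : V → Finset Att)
    {L : V → (∀ a, Val a) → D} (hL : ∀ v, DependsOnlyOn (L v) (bag v))
    {M : V → V → (∀ a, Val a) → D} (hM : MsgSystem G bag L M) :
    ∀ (n : ℕ) (u v : V), G.Adj u v → {x | InSubtree G u v x}.ncard ≤ n →
      DependsOnlyOn (M u v) (bag u ∩ bag v) := by
  intro n
  induction n with
  | zero =>
    intro u v huv hn
    exfalso
    have : 0 < {x | InSubtree G u v x}.ncard :=
      (Set.ncard_pos (Set.toFinite _)).mpr ⟨u, insubtree_self huv⟩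
    omega
  | succ n ih =>
    intro u v huv hn
    rw [hM u v huv]
    have hdep : DependsOnlyOn
        (fun t => L u t * ∏ w ∈ (G.neighborFinset u).erase v, M w u t) (bag u) := by
      refine (hL u).mul (DependsOnlyOn.prod fun w hw => ?_)
      obtain ⟨hwv, hw⟩ := Finset.mem_erase.mp hw
      have huw : G.Adj u w := (SimpleGraph.mem_neighborFinset _ _ _).mp hw
      have hlt := insubtree_ncard_lt hG huv huw hwv
      exact (ih w u huw.symm (by omega)).mono Finset.inter_subset_right
    have := hdep.margOver (E := bag u \ bag v)
    rwa [Finset.sdiff_sdiff_self_left] at this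

lemma steiner_out {G : SimpleGraph V} (hG : G.IsAcyclic) {T : Finset V}
    (hconn : ∀ u ∈ T, ∀ v ∈ T, ∃ p : G.Walk u v, ∀ w ∈ p.support, w ∈ T)
    {u v : V} (huv : G.Adj u v) (hu : u ∉ T) (hv : v ∈ T) :
    ∀ w, InSubtree G u v w → w ∉ T := by
  rintro w ⟨p, hvp⟩ hwT
  have hvP : v ∉ (p.toPath : G.Walk w u).support :=
    fun h => hvp (p.support_toPath_subset h)
  have hq : ((p.toPath : G.Walk w u).concat huv).IsPath := by
    rw [SimpleGraph.Walk.isPath_def, SimpleGraph.Walk.support_concat]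
    rw [List.nodup_append']
    refine ⟨(p.toPath).2.support_nodup, List.nodup_singleton v, ?_⟩
    intro x hx hx'
    rw [List.mem_singleton] at hx'
    subst hx'
    exact hvP hx
  obtain ⟨r, hr⟩ := hconn w hwT v hv
  have heq := path_eq_of_isAcyclic hG hq (r.toPath).2
  have huq : u ∈ ((p.toPath : G.Walk w u).concat huv).support := by
    rw [SimpleGraph.Walk.support_concat, List.mem_append]
    exact Or.inl (p.toPath : G.Walk w u).end_mem_support
  rw [heq] at huq
  exact hu (hr u (r.support_toPath_subset huq))

lemma absorb_margOver_adj {G : SimpleGraph V} [DecidableRel G.Adj]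
    (hG : G.IsAcyclic) (bag : V → Finset Att)
    {L' : V → (∀ a, Val a) → D} (hL' : ∀ v, DependsOnlyOn (L' v) (bag v))
    {M₁ : V → V → (∀ a, Val a) → D} (h₁ : MsgSystem G bag L' M₁)
    {r s : V} (hrs : G.Adj r s) :
    margOver (bag r) (absorb G L' M₁ r) = margOver (bag s) (absorb G L' M₁ s) := by
  classical
  set F : V → V → (∀ a, Val a) → D :=
    fun r s => fun t => L' r t * ∏ w ∈ (G.neighborFinset r).erase s, M₁ w r t with hF
  have depF : ∀ r s : V, DependsOnlyOn (F r s) (bag r) := by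
    intro r s
    refine (hL' r).mul (DependsOnlyOn.prod fun w hw => ?_)
    obtain ⟨hws, hw⟩ := Finset.mem_erase.mp hw
    have hrw : G.Adj r w := (SimpleGraph.mem_neighborFinset _ _ _).mp hw
    exact (msg_dep hG bag hL' h₁ _ w r hrw.symm le_rfl).mono Finset.inter_subset_right
  have habs : ∀ r s : V, G.Adj r s →
      absorb G L' M₁ r = fun t => F r s t * M₁ s r t := by
    intro r s hrs
    funext t
    show L' r t * ∏ w ∈ G.neighborFinset r, M₁ w r t = _
    rw [← Finset.mul_prod_erase _ _ ((SimpleGraph.mem_neighborFinset _ _ _).mpr hrs)]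
    simp only [hF]
    ring
  have key : ∀ r s : V, G.Adj r s →
      margOver (bag r) (absorb G L' M₁ r)
        = margOver (bag r ∪ bag s) (fun t => F r s t * F s r t) := by
    intro r s hrs
    rw [habs r s hrs, h₁ s r hrs.symm,
      ← margOver_mul_left (depF r s) Finset.disjoint_sdiff,
      margOver_margOver Finset.disjoint_sdiff, Finset.union_sdiff_self_eq_union]
  rw [key r s hrs, key s r hrs.symm, Finset.union_comm]
  exact congrArg _ (funext fun t => mul_comm _ _)

/-- Root relocation within the Steiner tree preserves messages: let `T` be a
connected subtree of the junction tree containing every bag whose (annotated)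
local relation differs between the pivot query (`L`, with calibrated messages
`M`) and the delta query (`L'`). Then for any delta-query message systems
`M₁, M₂` (i.e. for any two choices of root and traversal order): messages along
edges crossing into `T` from outside equal the stored calibrated messages, the
messages internal to `T` are uniquely determined (independent of the root), and
the delta query result is the same for any root choice within `T`. -/
theorem root_relocation_within_steiner_tree (G : SimpleGraph V) [DecidableRel G.Adj]
    (hG : G.IsTree) (bag : V → Finset Att)
    (hRI : RunningIntersection G bag)
    (L L' : V → (∀ a, Val a) → D)
    (hL : ∀ v, DependsOnlyOn (L v) (bag v))
    (hL' : ∀ v, DependsOnlyOn (L' v) (bag v))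
    (T : Finset V)
    (hconn : ∀ u ∈ T, ∀ v ∈ T, ∃ p : G.Walk u v, ∀ w ∈ p.support, w ∈ T)
    (hsame : ∀ v, v ∉ T → L' v = L v)
    (M : V → V → (∀ a, Val a) → D) (hM : MsgSystem G bag L M)
    (M₁ M₂ : V → V → (∀ a, Val a) → D)
    (h₁ : MsgSystem G bag L' M₁) (h₂ : MsgSystem G bag L' M₂) :
    (∀ u v, G.Adj u v → u ∉ T → v ∈ T → M₁ u v = M u v) ∧
      (∀ u v, G.Adj u v → M₁ u v = M₂ u v) ∧
      (∀ r₁ ∈ T, ∀ r₂ ∈ T,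
        margOver (bag r₁) (absorb G L' M₁ r₁) =
          margOver (bag r₂) (absorb G L' M₂ r₂)) := by
  have hac : G.IsAcyclic := hG.2
  have claim1 : ∀ u v, G.Adj u v → u ∉ T → v ∈ T → M₁ u v = M u v := by
    intro u v huv hu hv
    exact msg_eq_of_eq_on_subtree hac bag h₁ hM _ u v huv le_rfl
      fun w hw => hsame w (steiner_out hac hconn huv hu hv w hw)
  have claim2 : ∀ u v, G.Adj u v → M₁ u v = M₂ u v := fun u v huv =>
    msg_eq_of_eq_on_subtree hac bag h₁ h₂ _ u v huv le_rfl (fun _ _ => rfl)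
  refine ⟨claim1, claim2, ?_⟩
  intro r₁ _ r₂ _
  have habs2 : absorb G L' M₂ r₂ = absorb G L' M₁ r₂ := by
    funext t
    show L' r₂ t * _ = L' r₂ t * _
    refine congrArg _ (Finset.prod_congr rfl fun w hw => ?_)
    rw [claim2 w r₂ ((SimpleGraph.mem_neighborFinset _ _ _).mp hw).symm]
  rw [habs2]
  have main : ∀ x y : V, G.Walk x y →
      margOver (bag x) (absorb G L' M₁ x) = margOver (bag y) (absorb G L' M₁ y) := by
    intro x y p
    induction p with
    | nil => rfl
    | cons h q ih => exact (absorb_margOver_adj hac bag hL' h₁ h).trans ih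
  exact main r₁ r₂ (hG.1.preconnected r₁ r₂).some
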